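/- arXiv:1210.0772 — 3 statements merged into one kernel-verified Lean document; each statement's English description precedes it below -/
import Mathlib

section
/- Let C be a covering of a finite nonempty set U and let S_C = {X ⊆ U : SL(X) = X} be the fixed point family of the second type of covering lower approximation. Then S_C is a closure system of U (i.e., U ∈ S_C and S_C is closed under pairwise intersections) if and only if C is unary. -/
open Set

/-- A covering of a finite nonempty universe `α`: a family of nonempty subsets whose union is everything. -/
def IsCovering {α : Type*} (C : Set (Set α)) : Prop :=
  (∀ K ∈ C, K.Nonempty) ∧ ⋃₀ C = Set.univ

/-- The second type of covering lower approximation. -/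
def SL {α : Type*} (C : Set (Set α)) (X : Set α) : Set α :=
  ⋃₀ {K | K ∈ C ∧ K ⊆ X}

/-- The second type of covering upper approximation. -/
def SH {α : Type*} (C : Set (Set α)) (X : Set α) : Set α :=
  ⋃₀ {K | K ∈ C ∧ (K ∩ X).Nonempty}

/-- The minimal description of a point. -/
def Md {α : Type*} (C : Set (Set α)) (x : α) : Set (Set α) :=
  {K | K ∈ C ∧ x ∈ K ∧ ∀ S ∈ C, x ∈ S → S ⊆ K → S = K}

/-- A covering is unary if every point has exactly one element in its minimal description. -/
def Unary {α : Type*} (C : Set (Set α)) : Prop :=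
  ∀ x : α, ∃! K, K ∈ Md C x

/-- The neighborhood of a point. -/
def Nbhd {α : Type*} (C : Set (Set α)) (x : α) : Set α :=
  ⋂₀ {K | K ∈ C ∧ x ∈ K}

/-- The indiscernible neighborhood of a point. -/
def IndNbhd {α : Type*} (C : Set (Set α)) (x : α) : Set α :=
  ⋃₀ {K | K ∈ C ∧ x ∈ K}

/-- A member of the covering is reducible if it is a union of other members. -/
def Reducible {α : Type*} (C : Set (Set α)) (K : Set α) : Prop :=
  ∃ D ⊆ C \ {K}, K = ⋃₀ D

/-- The reduct of a covering: its irreducible members. -/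
def reduct {α : Type*} (C : Set (Set α)) : Set (Set α) :=
  {K | K ∈ C ∧ ¬ Reducible C K}

/-- The closure operator induced by the fixed point family of `SL`. -/
def clC {α : Type*} (C : Set (Set α)) (X : Set α) : Set α :=
  ⋂₀ {S | SL C S = S ∧ X ⊆ S}


/-!
Every member of `C` is a fixed point of `SL`, and the fixed points are exactly the unions of
members of `C`. Since `U` is finite, every member containing `x` contains a minimal description
of `x`. If fixed points are closed under `∩`, two minimal descriptions `M, M'` of `x` make
`M ∩ M'` a fixed point, so some member `S` with `x ∈ S ⊆ M ∩ M'` exists, and minimality forces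
`M = S = M'`. Conversely, if `x` has a unique minimal description `M`, then `M` lies inside
every member containing `x`; for `x ∈ F₁ ∩ F₂` with `F₁, F₂` fixed this puts `M ⊆ F₁ ∩ F₂`.
-/

section CoveringLowerApproximation

variable {α : Type*} {C : Set (Set α)}

theorem mem_SL_iff {X : Set α} {x : α} : x ∈ SL C X ↔ ∃ K ∈ C, K ⊆ X ∧ x ∈ K :=
  ⟨fun ⟨K, ⟨hK, hKX⟩, hx⟩ => ⟨K, hK, hKX, hx⟩,
    fun ⟨K, hK, hKX, hx⟩ => ⟨K, ⟨hK, hKX⟩, hx⟩⟩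

theorem SL_subset (X : Set α) : SL C X ⊆ X := fun _ hx =>
  let ⟨_, _, hKX, hxK⟩ := mem_SL_iff.1 hx
  hKX hxK

theorem SL_eq_of_mem {K : Set α} (hK : K ∈ C) : SL C K = K :=
  (SL_subset K).antisymm fun _ hx => mem_SL_iff.2 ⟨K, hK, subset_rfl, hx⟩

theorem SL_univ (hC : ⋃₀ C = univ) : SL C univ = univ := by
  refine (SL_subset univ).antisymm fun x _ => ?_
  obtain ⟨K, hK, hxK⟩ : x ∈ ⋃₀ C := hC ▸ mem_univ x
  exact mem_SL_iff.2 ⟨K, hK, subset_univ K, hxK⟩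

theorem exists_mem_Md_subset [Finite α] {x : α} {K : Set α} (hK : K ∈ C) (hx : x ∈ K) :
    ∃ M ∈ Md C x, M ⊆ K := by
  obtain ⟨M, ⟨hMC, hxM, hMK⟩, hmin⟩ :=
    (toFinite {S | S ∈ C ∧ x ∈ S ∧ S ⊆ K}).exists_minimal ⟨K, hK, hx, subset_rfl⟩
  exact ⟨M, ⟨hMC, hxM, fun S hS hxS hSM =>
    hSM.antisymm (hmin ⟨hS, hxS, hSM.trans hMK⟩ hSM)⟩, hMK⟩

theorem Md_nonempty [Finite α] (hC : ⋃₀ C = univ) (x : α) : (Md C x).Nonempty := by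
  obtain ⟨K, hK, hxK⟩ : x ∈ ⋃₀ C := hC ▸ mem_univ x
  obtain ⟨M, hM, -⟩ := exists_mem_Md_subset hK hxK
  exact ⟨M, hM⟩

theorem Md_subsingleton_of_SL_inter
    (hinter : ∀ F₁ F₂, SL C F₁ = F₁ → SL C F₂ = F₂ → SL C (F₁ ∩ F₂) = F₁ ∩ F₂) (x : α) :
    (Md C x).Subsingleton := by
  intro M hM M' hM'
  have hx : x ∈ SL C (M ∩ M') :=
    (hinter M M' (SL_eq_of_mem hM.1) (SL_eq_of_mem hM'.1)).symm ▸ ⟨hM.2.1, hM'.2.1⟩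
  obtain ⟨S, hS, hSMM', hxS⟩ := mem_SL_iff.1 hx
  rw [← hM.2.2 S hS hxS (hSMM'.trans inter_subset_left),
    hM'.2.2 S hS hxS (hSMM'.trans inter_subset_right)]

theorem Unary.subset_of_mem_Md [Finite α] (hU : Unary C) {x : α} {M K : Set α}
    (hM : M ∈ Md C x) (hK : K ∈ C) (hxK : x ∈ K) : M ⊆ K := by
  obtain ⟨M', hM', hM'K⟩ := exists_mem_Md_subset hK hxK
  exact (hU x).unique hM hM' ▸ hM'K

theorem Unary.SL_inter [Finite α] (hU : Unary C) {F₁ F₂ : Set α}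
    (h₁ : SL C F₁ = F₁) (h₂ : SL C F₂ = F₂) : SL C (F₁ ∩ F₂) = F₁ ∩ F₂ := by
  refine (SL_subset _).antisymm fun x ⟨hx₁, hx₂⟩ => ?_
  obtain ⟨K₁, hK₁, hK₁F₁, hxK₁⟩ := mem_SL_iff.1 (h₁.symm ▸ hx₁)
  obtain ⟨K₂, hK₂, hK₂F₂, hxK₂⟩ := mem_SL_iff.1 (h₂.symm ▸ hx₂)
  obtain ⟨M, hM, -⟩ := hU x
  exact mem_SL_iff.2 ⟨M, hM.1,
    subset_inter ((hU.subset_of_mem_Md hM hK₁ hxK₁).trans hK₁F₁)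
      ((hU.subset_of_mem_Md hM hK₂ hxK₂).trans hK₂F₂), hM.2.1⟩

end CoveringLowerApproximation

theorem stmt_0_general {α : Type*} [Fintype α] (C : Set (Set α))
    (hC : IsCovering C) :
    (Set.univ ∈ {X : Set α | SL C X = X} ∧
      ∀ F1 ∈ {X : Set α | SL C X = X}, ∀ F2 ∈ {X : Set α | SL C X = X},
        F1 ∩ F2 ∈ {X : Set α | SL C X = X}) ↔ Unary C := by
  constructor
  · rintro ⟨-, hinter⟩ x
    obtain ⟨M, hM⟩ := Md_nonempty hC.2 x
    have hsub := Md_subsingleton_of_SL_inter (fun F₁ F₂ h₁ h₂ => hinter F₁ h₁ F₂ h₂) x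
    exact ⟨M, hM, fun M' hM' => hsub hM' hM⟩
  · exact fun hU => ⟨SL_univ hC.2, fun F₁ h₁ F₂ h₂ => hU.SL_inter h₁ h₂⟩

theorem stmt_0 {α : Type*} [Fintype α] [Nonempty α] (C : Set (Set α))
    (hC : IsCovering C) :
    (Set.univ ∈ {X : Set α | SL C X = X} ∧
      ∀ F1 ∈ {X : Set α | SL C X = X}, ∀ F2 ∈ {X : Set α | SL C X = X},
        F1 ∩ F2 ∈ {X : Set α | SL C X = X}) ↔ Unary C :=
  stmt_0_general C hC
end

section
/- Let C be a covering of a finite nonempty set U. Then SH(SH(X)) = SH(X) for all X ⊆ U if and only if the family {SH({x}) : x ∈ U} forms a partition of U, i.e., for all x, y ∈ U, either SH({x}) = SH({y}) or SH({x}) ∩ SH({y}) = ∅. -/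
open Set

/-! `SH C {a}` is the set of points sharing a block of `C` with `a`. This relation is symmetric,
and reflexive because `C` covers, so both idempotence of `SH C` and the partition property say
that it is transitive, i.e. that `SH C {b} = SH C {a}` whenever `b ∈ SH C {a}`. -/

section SecondUpperApproximation

variable {α : Type*} {C : Set (Set α)} {X Y : Set α} {a b : α}

lemma mem_SH_singleton : b ∈ SH C {a} ↔ ∃ K ∈ C, a ∈ K ∧ b ∈ K := by
  simp only [SH, mem_sUnion, mem_ofPred_eq, inter_singleton_nonempty, and_assoc]

lemma mem_SH_singleton_comm : b ∈ SH C {a} ↔ a ∈ SH C {b} := by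
  simp only [mem_SH_singleton, and_comm]

lemma mem_SH_iff_exists_mem_SH_singleton : b ∈ SH C X ↔ ∃ x ∈ X, b ∈ SH C {x} := by
  simp only [mem_SH_singleton]
  simp only [SH, mem_sUnion, mem_ofPred_eq]
  constructor
  · rintro ⟨K, ⟨hK, x, hxK, hxX⟩, hbK⟩
    exact ⟨x, hxX, K, hK, hxK, hbK⟩
  · rintro ⟨x, hxX, K, hK, hxK, hbK⟩
    exact ⟨K, ⟨hK, x, hxK, hxX⟩, hbK⟩

lemma SH_mono (h : X ⊆ Y) : SH C X ⊆ SH C Y :=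
  fun _ ⟨K, ⟨hK, hKX⟩, hbK⟩ => ⟨K, ⟨hK, hKX.mono (inter_subset_inter_right K h)⟩, hbK⟩

lemma mem_SH_singleton_self (hC : ⋃₀ C = univ) (a : α) : a ∈ SH C {a} := by
  obtain ⟨K, hK, haK⟩ : a ∈ ⋃₀ C := hC ▸ mem_univ a
  exact mem_SH_singleton.2 ⟨K, hK, haK, haK⟩

lemma subset_SH (hC : ⋃₀ C = univ) (X : Set α) : X ⊆ SH C X :=
  fun a ha => SH_mono (singleton_subset_iff.2 ha) (mem_SH_singleton_self hC a)

def SHNeighbourhoodsStable (C : Set (Set α)) : Prop :=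
  ∀ a b : α, b ∈ SH C {a} → SH C {b} = SH C {a}

lemma SHNeighbourhoodsStable.of_SH_SH (h : ∀ X : Set α, SH C (SH C X) = SH C X) :
    SHNeighbourhoodsStable C := by
  have hsub : ∀ a b : α, b ∈ SH C {a} → SH C {b} ⊆ SH C {a} := fun a b hb =>
    h {a} ▸ SH_mono (singleton_subset_iff.2 hb)
  exact fun a b hb => (hsub a b hb).antisymm (hsub b a (mem_SH_singleton_comm.1 hb))

lemma SHNeighbourhoodsStable.SH_SH (hC : ⋃₀ C = univ) (h : SHNeighbourhoodsStable C)
    (X : Set α) : SH C (SH C X) = SH C X := by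
  refine subset_antisymm (fun c hc => ?_) (subset_SH hC _)
  obtain ⟨b, hb, hcb⟩ := mem_SH_iff_exists_mem_SH_singleton.1 hc
  obtain ⟨a, haX, hba⟩ := mem_SH_iff_exists_mem_SH_singleton.1 hb
  exact mem_SH_iff_exists_mem_SH_singleton.2 ⟨a, haX, h a b hba ▸ hcb⟩

lemma SHNeighbourhoodsStable.eq_or_disjoint (h : SHNeighbourhoodsStable C) (a b : α) :
    SH C {a} = SH C {b} ∨ SH C {a} ∩ SH C {b} = ∅ := by
  rcases eq_empty_or_nonempty (SH C {a} ∩ SH C {b}) with hdisj | ⟨c, hca, hcb⟩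
  · exact Or.inr hdisj
  · exact Or.inl ((h a c hca).symm.trans (h b c hcb))

lemma SHNeighbourhoodsStable.of_eq_or_disjoint (hC : ⋃₀ C = univ)
    (h : ∀ a b : α, SH C {a} = SH C {b} ∨ SH C {a} ∩ SH C {b} = ∅) :
    SHNeighbourhoodsStable C := by
  intro a b hb
  have hbb : b ∈ SH C {b} ∩ SH C {a} := ⟨mem_SH_singleton_self hC b, hb⟩
  exact (h b a).resolve_right (nonempty_of_mem hbb).ne_empty

end SecondUpperApproximation

theorem stmt_7_general {α : Type*} (C : Set (Set α))
    (hC : IsCovering C) :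
    (∀ X : Set α, SH C (SH C X) = SH C X) ↔
    (∀ x y : α, SH C {x} = SH C {y} ∨ SH C {x} ∩ SH C {y} = ∅) :=
  ⟨fun h => (SHNeighbourhoodsStable.of_SH_SH h).eq_or_disjoint,
    fun h => (SHNeighbourhoodsStable.of_eq_or_disjoint hC.2 h).SH_SH hC.2⟩

theorem stmt_7 {α : Type*} [Fintype α] [Nonempty α] (C : Set (Set α))
    (hC : IsCovering C) :
    (∀ X : Set α, SH C (SH C X) = SH C X) ↔
    (∀ x y : α, SH C {x} = SH C {y} ∨ SH C {x} ∩ SH C {y} = ∅) :=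
  stmt_7_general C hC
end

section
/- Let C be a covering of a finite nonempty set U. Without any further hypothesis on C, SH satisfies the exchange axiom (CL4): for all X ⊆ U and x, y ∈ U, if y ∈ SH(X ∪ {x}) \ SH(X) then x ∈ SH(X ∪ {y}). -/
open Set

theorem SH_union {α : Type*} (C : Set (Set α)) (X Y : Set α) :
    SH C (X ∪ Y) = SH C X ∪ SH C Y := by
  ext y
  simp only [SH, mem_sUnion, mem_ofPred_eq, mem_union, inter_union_distrib_left,
    union_nonempty]
  grind

theorem SH_singleton {α : Type*} (C : Set (Set α)) (x : α) : SH C {x} = IndNbhd C x := by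
  simp only [SH, IndNbhd, inter_singleton_nonempty]

theorem mem_IndNbhd_comm {α : Type*} {C : Set (Set α)} {x y : α} :
    y ∈ IndNbhd C x ↔ x ∈ IndNbhd C y := by
  simp only [IndNbhd, mem_sUnion, mem_ofPred_eq]
  grind

theorem stmt_17_general {α : Type*} (C : Set (Set α)) :
    ∀ (X : Set α) (x y : α),
      y ∈ SH C (X ∪ {x}) \ SH C X → x ∈ SH C (X ∪ {y}) := by
  rintro X x y ⟨hyx, hyX⟩
  rw [SH_union, SH_singleton] at hyx ⊢
  exact Or.inr (mem_IndNbhd_comm.1 (hyx.resolve_left hyX))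

theorem stmt_17 {α : Type*} [Fintype α] [Nonempty α] (C : Set (Set α))
    (hC : IsCovering C) :
    ∀ (X : Set α) (x y : α),
      y ∈ SH C (X ∪ {x}) \ SH C X → x ∈ SH C (X ∪ {y}) :=
  stmt_17_general C
end
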